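/- Let a₁,…,a_k ∈ [n-1] with induced blocks 𝓑₁,…,𝓑_t, and let J = 𝔖_{𝓑₁} × ⋯ × 𝔖_{𝓑_t} ≤ 𝔖_n act on 𝔖_{n,r} by π · (ω,τ) = (π,𝟎)(ω,τ)(π,𝟎)^{-1}. If C is a conjugacy class of 𝔖_{n,r} with no cycles of lengths 1,2,…,2k, then every J-orbit in C has size |J| = ∏_i |𝓑_i|!, and each orbit contains exactly one element with descents at all of a₁,…,a_k. -/

import Mathlib

open scoped Classical BigOperators

namespace ColoredPerm

/-- A colored permutation: a pair of a permutation of `Fin n` and a coloring. -/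
abbrev CP (n r : ℕ) := Equiv.Perm (Fin n) × (Fin n → ZMod r)

/-- Index `i : Fin n` represents position `i+1 ∈ [n]`.  Descent at position `i+1`. -/
def IsDescent {n r : ℕ} (σ : CP n r) (i : Fin n) : Prop :=
  if h : (i : ℕ) + 1 < n then
    (σ.2 ⟨(i : ℕ) + 1, h⟩).val < (σ.2 i).val ∨
      (σ.2 i = σ.2 ⟨(i : ℕ) + 1, h⟩ ∧ σ.1 ⟨(i : ℕ) + 1, h⟩ < σ.1 i)
  else (σ.2 i).val ≠ 0

/-- Descent indicator. -/
noncomputable def X {n r : ℕ} (i : Fin n) (σ : CP n r) : ℚ :=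
  if IsDescent σ i then 1 else 0

/-- Color indicator `Y_{i,c}`. -/
noncomputable def Y {n r : ℕ} (i : Fin n) (c : ZMod r) (σ : CP n r) : ℚ :=
  if σ.2 i = c then 1 else 0

noncomputable def des {n r : ℕ} (σ : CP n r) : ℕ :=
  (Finset.univ.filter (fun i => IsDescent σ i)).card

/-- Major index: sum of descent positions lying in `[n-1]`. -/
noncomputable def maj {n r : ℕ} (σ : CP n r) : ℕ :=
  ∑ i ∈ Finset.univ.filter (fun i : Fin n => IsDescent σ i ∧ (i : ℕ) + 1 < n),
    ((i : ℕ) + 1)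

def col {n r : ℕ} (σ : CP n r) : ℕ := ∑ i, (σ.2 i).val

noncomputable def fmaj {n r : ℕ} (σ : CP n r) : ℕ := r * maj σ + col σ

/-- Ordinary descent of a permutation of `Fin n` at position `i+1` (no descent at last position). -/
def IsDescentS {n : ℕ} (w : Equiv.Perm (Fin n)) (i : Fin n) : Prop :=
  if h : (i : ℕ) + 1 < n then w ⟨(i : ℕ) + 1, h⟩ < w i else False

noncomputable def XS {n : ℕ} (i : Fin n) (w : Equiv.Perm (Fin n)) : ℚ :=
  if IsDescentS w i then 1 else 0

noncomputable def majS {n : ℕ} (w : Equiv.Perm (Fin n)) : ℕ :=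
  ∑ i ∈ Finset.univ.filter (fun i : Fin n => IsDescentS w i ∧ (i : ℕ) + 1 < n),
    ((i : ℕ) + 1)

/-- Expectation of `f` under the uniform distribution on a finite set `S`. -/
noncomputable def E {α : Type*} (S : Finset α) (f : α → ℚ) : ℚ :=
  (∑ x ∈ S, f x) / S.card

/-- Group multiplication of the wreath product `ℤ_r ≀ 𝔖_n`. -/
def cmul {n r : ℕ} (x y : CP n r) : CP n r :=
  (x.1 * y.1, fun i => x.2 (y.1 i) + y.2 i)

/-- Inverse in the wreath product. -/
def cinv {n r : ℕ} (x : CP n r) : CP n r :=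
  (x.1⁻¹, fun i => - x.2 (x.1⁻¹ i))

/-- Conjugacy in the colored permutation group. -/
def IsConjCP {n r : ℕ} (x y : CP n r) : Prop :=
  ∃ g : CP n r, cmul (cmul g x) (cinv g) = y

/-- The elements in the same cycle of `σ` as `i`. -/
noncomputable def cycleSet {n r : ℕ} (σ : CP n r) (i : Fin n) : Finset (Fin n) :=
  Finset.univ.filter (fun x => σ.1.SameCycle i x)

/-- The number of cycles of `σ` of length `ℓ` whose colors sum to `j`. -/
noncomputable def cycleCount {n r : ℕ} (σ : CP n r) (ℓ : ℕ) (j : ZMod r) : ℕ :=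
  (Finset.univ.filter (fun i : Fin n =>
      (cycleSet σ i).card = ℓ ∧ (∑ x ∈ cycleSet σ i, σ.2 x) = j)).card / ℓ

/-- `σ` has no cycle of length `ℓ`. -/
def NoCycleOfLength {n r : ℕ} (σ : CP n r) (ℓ : ℕ) : Prop :=
  ∀ i : Fin n, (cycleSet σ i).card ≠ ℓ

/-- `C` is a conjugacy class of `𝔖_{n,r}`. -/
def IsConjClass {n r : ℕ} [NeZero r] (C : Finset (CP n r)) : Prop :=
  ∃ σ₀ : CP n r, C = Finset.univ.filter (fun σ => IsConjCP σ₀ σ)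

/-- `C` has no cycles of lengths `1, 2, …, m`. -/
def NoShortCycles {n r : ℕ} (C : Finset (CP n r)) (m : ℕ) : Prop :=
  ∀ σ ∈ C, ∀ ℓ, 1 ≤ ℓ → ℓ ≤ m → NoCycleOfLength σ ℓ

/-- The relation identifying `a_i` with `a_i + 1` (on indices: `a i` with the index of
value `(a i) + 1`, when it exists). -/
def adjRel {n k : ℕ} (a : Fin k → Fin n) (p q : Fin n) : Prop :=
  (∃ i, a i = p) ∧ (q : ℕ) = (p : ℕ) + 1

/-- Being in the same block induced by `a`. -/
def SameBlock {n k : ℕ} (a : Fin k → Fin n) (p q : Fin n) : Prop :=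
  Relation.EqvGen (adjRel a) p q

/-- The block containing `p`. -/
noncomputable def blockOf {n k : ℕ} (a : Fin k → Fin n) (p : Fin n) : Finset (Fin n) :=
  Finset.univ.filter (fun q => SameBlock a p q)

/-- The set of blocks induced by `a`. -/
noncomputable def blocks {n k : ℕ} (a : Fin k → Fin n) : Finset (Finset (Fin n)) :=
  Finset.univ.image (blockOf a)

/-- `∏_i 1/|𝓑_i|!` over the blocks induced by `a`. -/
noncomputable def blockProd {n k : ℕ} (a : Fin k → Fin n) : ℚ :=
  ∏ b ∈ blocks a, (1 : ℚ) / (Nat.factorial b.card)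

end ColoredPerm

namespace ColoredPerm

noncomputable def ER {α : Type*} (S : Finset α) (f : α → ℝ) : ℝ :=
  (∑ x ∈ S, f x) / S.card

noncomputable def XR {n r : ℕ} (i : Fin n) (σ : CP n r) : ℝ :=
  if IsDescent σ i then 1 else 0

noncomputable def XSR {n : ℕ} (i : Fin n) (w : Equiv.Perm (Fin n)) : ℝ :=
  if IsDescentS w i then 1 else 0

end ColoredPerm


/-!
Number the blocks by `blockKey a`, the count of cuts `m ∉ {aᵢ}` below a position; the group `J`
is then the set of permutations preserving `blockKey a`, and at most `2k` positions lie in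
nontrivial blocks. Since every cycle of `x = (w, c) ∈ C` is longer than `2k`, no `w`-orbit stays
inside the nontrivial blocks.

`J` acts freely: if `π'⁻¹π ∈ J` commutes with `w`, it fixes a point of every cycle, hence
everything. Conjugating `x` by `π` puts the letter `(c q, π (w q))` at position `π q`, so having
descents at all `aᵢ` means that `π` lists every block in decreasing order of these letters. Two
such `π` that order a pair `q, q'` of a block differently must give `q, q'` equal colours and
order `w q', w q` differently, again inside one block; iterating, the `w`-orbit of `q` would
never leave the nontrivial blocks. For existence, unfold the requirement: equal colours defer the
comparison of `q, q'` to that of `w q, w q'`, by position when they lie in different blocks and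
reversed when they do not. So sorting each block by the alternating-lexicographic word
`c q, κ (w q), c (w q), κ (w² q), …` (`κ = blockKey a`) gives a representative.
-/

open Finset Equiv

theorem Pi.toLex_lt_toLex_iff_head {β : Type*} [LT β] {f g : ℕ → β} :
    toLex f < toLex g ↔
      f 0 < g 0 ∨ f 0 = g 0 ∧ toLex (fun m => f (m + 1)) < toLex (fun m => g (m + 1)) := by
  show (∃ i, (∀ j < i, f j = g j) ∧ f i < g i) ↔
    f 0 < g 0 ∨ f 0 = g 0 ∧ ∃ i, (∀ j < i, f (j + 1) = g (j + 1)) ∧ f (i + 1) < g (i + 1)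
  constructor
  · rintro ⟨_ | i, hfg, hlt⟩
    · exact Or.inl hlt
    · exact Or.inr ⟨hfg 0 (by omega), i, fun j hj => hfg (j + 1) (by omega), hlt⟩
  · rintro (hlt | ⟨h0, i, hfg, hlt⟩)
    · exact ⟨0, fun j hj => absurd hj (Nat.not_lt_zero j), hlt⟩
    · refine ⟨i + 1, fun j hj => ?_, hlt⟩
      cases j with
      | zero => exact h0
      | succ j => exact hfg j (by omega)

theorem Equiv.Perm.eq_of_forall_lt_imp_lt {n : ℕ} {π π' : Perm (Fin n)}
    (h : ∀ z z', π z < π z' → π' z < π' z') : π = π' := by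
  have hmono : Monotone (id ∘ ⇑(π' * π⁻¹)) :=
    StrictMono.monotone fun u v huv => h _ _ (by simpa using huv)
  have hid := Tuple.unique_monotone hmono (τ := 1) monotone_id
  exact Equiv.ext fun z => by simpa using (congrFun hid (π z)).symm

namespace ColoredPerm

variable {n r k : ℕ} (a : Fin k → Fin n)

section Blocks

def blockKey (p : Fin n) : ℕ := #{m | m < p ∧ m ∉ Set.range a}

lemma filter_lt_subset_filter_lt {p q : Fin n} (h : p ≤ q) :
    ({m | m < p ∧ m ∉ Set.range a} : Finset (Fin n)) ⊆
      ({m | m < q ∧ m ∉ Set.range a} : Finset (Fin n)) :=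
  fun m hm => by
    simp only [mem_filter, mem_univ, true_and] at hm ⊢
    exact ⟨hm.1.trans_le h, hm.2⟩

lemma blockKey_mono {p q : Fin n} (h : p ≤ q) : blockKey a p ≤ blockKey a q :=
  card_le_card (filter_lt_subset_filter_lt a h)

lemma lt_of_blockKey_lt {p q : Fin n} (h : blockKey a p < blockKey a q) : p < q :=
  lt_of_not_ge fun hqp => (blockKey_mono a hqp).not_gt h

lemma mem_range_of_blockKey_eq {p m q : Fin n} (hpm : p ≤ m) (hmq : m < q)
    (h : blockKey a p = blockKey a q) : m ∈ Set.range a := by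
  by_contra hm
  refine h.not_lt (card_lt_card
    ⟨filter_lt_subset_filter_lt a (hpm.trans hmq.le), fun hsub => ?_⟩)
  exact (mem_filter.mp (hsub (mem_filter.mpr ⟨mem_univ m, hmq, hm⟩))).2.1.not_ge hpm

lemma blockKey_eq_of_val_eq_succ (i : Fin k) {p : Fin n} (hp : (p : ℕ) = a i + 1) :
    blockKey a p = blockKey a (a i) := by
  refine congrArg card (filter_congr fun m _ => ?_)
  simp only [Fin.lt_def, hp]
  refine ⟨fun ⟨hlt, hm⟩ => ⟨?_, hm⟩, fun ⟨hlt, hm⟩ => ⟨by omega, hm⟩⟩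
  have := Fin.val_ne_of_ne fun h : m = a i => hm ⟨i, h.symm⟩
  omega

lemma sameBlock_iff_blockKey_eq {p q : Fin n} :
    SameBlock a p q ↔ blockKey a p = blockKey a q := by
  refine ⟨fun h => ?_, fun h => ?_⟩
  · induction h with
    | rel p q h =>
      obtain ⟨⟨i, rfl⟩, hq⟩ := h
      exact (blockKey_eq_of_val_eq_succ a i hq).symm
    | refl => rfl
    | symm _ _ _ ih => exact ih.symm
    | trans _ _ _ _ _ ih₁ ih₂ => exact ih₁.trans ih₂
  · wlog hpq : p ≤ q generalizing p q
    · exact Relation.EqvGen.symm _ _ (this h.symm (le_of_not_ge hpq))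
    obtain ⟨d, hd⟩ := Nat.exists_eq_add_of_le (Fin.le_def.mp hpq)
    induction d generalizing q with
    | zero => exact Fin.ext hd.symm ▸ Relation.EqvGen.refl p
    | succ d ih =>
      set m : Fin n := ⟨p + d, by omega⟩
      have hmq : m < q := Fin.lt_def.mpr (show (p : ℕ) + d < q by omega)
      have hpm : p ≤ m := Fin.le_def.mpr (show (p : ℕ) ≤ p + d by omega)
      have hkey : blockKey a p = blockKey a m :=
        le_antisymm (blockKey_mono a hpm) (h ▸ blockKey_mono a hmq.le)
      obtain ⟨i, hi⟩ := mem_range_of_blockKey_eq a le_rfl hmq (hkey.symm.trans h)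
      exact Relation.EqvGen.trans _ _ _ (ih hkey hpm rfl)
        (Relation.EqvGen.rel _ _ ⟨⟨i, hi⟩, show (q : ℕ) = p + d + 1 by omega⟩)

lemma card_filter_exists_blockKey_eq_le :
    #{p | ∃ q ≠ p, blockKey a q = blockKey a p} ≤ 2 * k := by
  have hmem : ∀ p : Fin n, (∃ q ≠ p, blockKey a q = blockKey a p) →
      ∃ i, (a i : ℕ) = p ∨ (a i : ℕ) + 1 = p := by
    rintro p ⟨q, hqp, hkey⟩
    rcases hqp.lt_or_gt with hlt | hlt
    · have hlt : (q : ℕ) < p := hlt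
      obtain ⟨i, hi⟩ := mem_range_of_blockKey_eq a (m := ⟨p - 1, by omega⟩)
        (Fin.le_def.mpr (show (q : ℕ) ≤ p - 1 by omega))
        (Fin.lt_def.mpr (show (p : ℕ) - 1 < p by omega)) hkey
      exact ⟨i, Or.inr (by rw [hi]; show (p : ℕ) - 1 + 1 = p; omega)⟩
    · obtain ⟨i, hi⟩ := mem_range_of_blockKey_eq a le_rfl hlt hkey.symm
      exact ⟨i, Or.inl (by rw [hi])⟩
  calc #{p | ∃ q ≠ p, blockKey a q = blockKey a p}
      = #(image Fin.val {p | ∃ q ≠ p, blockKey a q = blockKey a p}) :=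
        (card_image_of_injective _ Fin.val_injective).symm
    _ ≤ #(image (fun i => (a i : ℕ)) univ ∪ image (fun i => (a i : ℕ) + 1) univ) := by
        refine card_le_card fun m hm => ?_
        obtain ⟨p, hp, rfl⟩ := mem_image.mp hm
        obtain ⟨i, hi | hi⟩ := hmem p (mem_filter.mp hp).2 <;> simp [← hi]
    _ ≤ k + k := (card_union_le _ _).trans
        (add_le_add (card_image_le.trans (by simp)) (card_image_le.trans (by simp)))
    _ = 2 * k := (two_mul k).symm

end Blocks

section YoungSubgroup

lemma blockOf_eq_blockOf_iff {p q : Fin n} : blockOf a p = blockOf a q ↔ SameBlock a p q := by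
  refine ⟨fun h => ?_, fun h => ?_⟩
  · have hq : q ∈ blockOf a p := h ▸ mem_filter.mpr ⟨mem_univ q, Relation.EqvGen.refl q⟩
    exact (mem_filter.mp hq).2
  · ext z
    simp only [blockOf, mem_filter, mem_univ, true_and]
    exact ⟨(Relation.EqvGen.trans _ _ _ (Relation.EqvGen.symm _ _ h) ·),
      (Relation.EqvGen.trans _ _ _ h ·)⟩

theorem card_filter_sameBlock :
    #{π : Perm (Fin n) | ∀ p, SameBlock a p (π p)} =
      ∏ b ∈ blocks a, Nat.factorial b.card := by
  have hstab : ∀ π : Perm (Fin n),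
      (∀ p, SameBlock a p (π p)) ↔ blockOf a ∘ π = blockOf a := by
    refine fun π => ⟨fun h => funext fun p => ((blockOf_eq_blockOf_iff a).mpr (h p)).symm,
      fun h p => (blockOf_eq_blockOf_iff a).mp (congrFun h p).symm⟩
  rw [filter_congr fun π _ => hstab π, ← Fintype.card_subtype, DomMulAct.stabilizer_card']
  refine prod_congr rfl fun b hb => ?_
  obtain ⟨z, -, rfl⟩ := mem_image.mp hb
  rw [Fintype.card_subtype]
  congr 2
  refine filter_congr fun q _ => ?_
  rw [blockOf_eq_blockOf_iff]
  exact ⟨(Relation.EqvGen.symm _ _ ·), (Relation.EqvGen.symm _ _ ·)⟩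

def PreservesBlocks (π : Perm (Fin n)) : Prop := ∀ p, blockKey a (π p) = blockKey a p

lemma mem_filter_sameBlock {π : Perm (Fin n)} :
    π ∈ ({π : Perm (Fin n) | ∀ p, SameBlock a p (π p)} : Finset _) ↔
      PreservesBlocks a π := by
  simp [PreservesBlocks, sameBlock_iff_blockKey_eq, eq_comm]

lemma lt_iff_lt_of_blockKey_ne {π : Perm (Fin n)} (hπ : PreservesBlocks a π)
    {p q : Fin n} (h : blockKey a p ≠ blockKey a q) : π p < π q ↔ p < q := by
  rcases h.lt_or_gt with h | h
  · exact iff_of_true (lt_of_blockKey_lt a (by rwa [hπ, hπ])) (lt_of_blockKey_lt a h)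
  · exact iff_of_false (lt_asymm (lt_of_blockKey_lt a (by rwa [hπ, hπ])))
      (lt_asymm (lt_of_blockKey_lt a h))

end YoungSubgroup

section Descents

def conjPerm (π : Perm (Fin n)) (x : CP n r) : CP n r := (π * x.1 * π⁻¹, x.2 ∘ ⇑π⁻¹)

lemma cmul_cmul_cinv (π : Perm (Fin n)) (x : CP n r) :
    cmul (cmul ((π, fun _ => 0) : CP n r) x) (cinv (π, fun _ => 0)) = conjPerm π x := by
  ext i <;> simp [cmul, cinv, conjPerm]

def letter (y : CP n r) (p : Fin n) : ℕ ×ₗ Fin n := toLex ((y.2 p).val, y.1 p)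

lemma letter_conjPerm (π : Perm (Fin n)) (x : CP n r) (q : Fin n) :
    letter (conjPerm π x) (π q) = toLex ((x.2 q).val, π (x.1 q)) := by
  simp [letter, conjPerm]

lemma isDescent_iff_letter_lt [NeZero r] (y : CP n r) {p : Fin n} (h : (p : ℕ) + 1 < n) :
    IsDescent y p ↔ letter y ⟨p + 1, h⟩ < letter y p := by
  rw [IsDescent, dif_pos h, letter, letter, Prod.Lex.toLex_lt_toLex,
    (ZMod.val_injective r).eq_iff, eq_comm (a := y.2 p)]

lemma lt_of_succ_lt_of_blockKey_eq {β : Type*} [Preorder β] {g : Fin n → β}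
    (hg : ∀ i (h : (a i : ℕ) + 1 < n), g ⟨a i + 1, h⟩ < g (a i)) {p q : Fin n} (hpq : p < q)
    (hkey : blockKey a p = blockKey a q) : g q < g p := by
  have hstep : ∀ m q : Fin n, m ∈ Set.range a → (q : ℕ) = m + 1 → g q < g m := by
    rintro m q ⟨i, rfl⟩ hq
    have hlt : (a i : ℕ) + 1 < n := hq ▸ q.isLt
    exact (Fin.ext hq : q = ⟨a i + 1, hlt⟩) ▸ hg i hlt
  obtain ⟨d, hd⟩ := Nat.exists_eq_add_of_lt (Fin.lt_def.mp hpq)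
  induction d generalizing q with
  | zero => exact hstep p q (mem_range_of_blockKey_eq a le_rfl hpq hkey) hd
  | succ d ih =>
    set m : Fin n := ⟨p + d + 1, by omega⟩
    have hmq : m < q := Fin.lt_def.mpr (show (p : ℕ) + d + 1 < q by omega)
    have hpm : p < m := Fin.lt_def.mpr (show (p : ℕ) < p + d + 1 by omega)
    have hkey' : blockKey a p = blockKey a m :=
      le_antisymm (blockKey_mono a hpm.le) (hkey ▸ blockKey_mono a hmq.le)
    exact (hstep m q (mem_range_of_blockKey_eq a le_rfl hmq (hkey'.symm.trans hkey))
      (show (q : ℕ) = p + d + 1 + 1 by omega)).trans (ih hpm hkey' rfl)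

def DescendsOnBlocks (y : CP n r) : Prop :=
  ∀ p q, p < q → blockKey a p = blockKey a q → letter y q < letter y p

lemma forall_isDescent_iff [NeZero r] (ha : ∀ i, (a i : ℕ) + 1 < n) (y : CP n r) :
    (∀ i, IsDescent y (a i)) ↔ DescendsOnBlocks a y := by
  refine ⟨fun h p q hpq hkey => ?_, fun h i => ?_⟩
  · exact lt_of_succ_lt_of_blockKey_eq a
      (fun i hi => (isDescent_iff_letter_lt y hi).mp (h i)) hpq hkey
  · rw [isDescent_iff_letter_lt y (ha i)]
    exact h _ _ (Fin.lt_def.mpr (Nat.lt_succ_self _)) (blockKey_eq_of_val_eq_succ a i rfl).symm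

end Descents

section Orbits

lemma two_mul_lt_card_cycleSet {x : CP n r}
    (hx : ∀ ℓ, 1 ≤ ℓ → ℓ ≤ 2 * k → NoCycleOfLength x ℓ) (q : Fin n) :
    2 * k < #(cycleSet x q) := by
  by_contra! h
  have hq : q ∈ cycleSet x q := mem_filter.mpr ⟨mem_univ q, Perm.SameCycle.refl _ _⟩
  exact hx _ (card_pos.mpr ⟨q, hq⟩) h q rfl

lemma exists_blockKey_pow_ne {x : CP n r} {q q' : Fin n} (hq : 2 * k < #(cycleSet x q))
    (hne : q ≠ q') : ∃ j : ℕ, blockKey a ((x.1 ^ j) q) ≠ blockKey a ((x.1 ^ j) q') := by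
  by_contra! h
  refine ((card_le_card fun z hz => ?_).trans (card_filter_exists_blockKey_eq_le a)).not_gt hq
  obtain ⟨j, -, rfl⟩ := (mem_filter.mp hz).2.exists_pow_eq'
  exact mem_filter.mpr ⟨mem_univ _, (x.1 ^ j) q',
    fun h' => hne ((x.1 ^ j).injective h').symm, (h j).symm⟩

lemma eq_of_conjPerm_eq {x : CP n r} (hcyc : ∀ q, 2 * k < #(cycleSet x q))
    {π π' : Perm (Fin n)} (hπ : PreservesBlocks a π)
    (hπ' : PreservesBlocks a π') (h : conjPerm π x = conjPerm π' x) : π = π' := by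
  have hcomm : Commute (π'⁻¹ * π) x.1 := by
    have h1 : π * x.1 * π⁻¹ = π' * x.1 * π'⁻¹ := congrArg Prod.fst h
    calc π'⁻¹ * π * x.1 = π'⁻¹ * (π * x.1 * π⁻¹) * π := by group
      _ = x.1 * (π'⁻¹ * π) := by rw [h1]; group
  have hδ : ∀ z, blockKey a (π'⁻¹ (π z)) = blockKey a z := fun z => by
    simpa [hπ z] using (hπ' (π'⁻¹ (π z))).symm
  by_contra hne
  obtain ⟨q, hq⟩ := DFunLike.ne_iff.mp hne
  obtain ⟨j, hj⟩ := exists_blockKey_pow_ne a (hcyc _) (q' := q)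
    fun h' => hq (Perm.inv_eq_iff_eq.mp h')
  have hpow := DFunLike.congr_fun (hcomm.pow_right j).eq q
  simp only [Perm.coe_mul, Function.comp_apply] at hpow
  exact hj (by rw [← hpow, hδ])

end Orbits

section Representative

lemma disagreement_step {x : CP n r} {π π' : Perm (Fin n)}
    (hπ : PreservesBlocks a π) (hπ' : PreservesBlocks a π')
    (hd : DescendsOnBlocks a (conjPerm π x)) (hd' : DescendsOnBlocks a (conjPerm π' x))
    {u v : Fin n} (hkey : blockKey a u = blockKey a v) (h : π u < π v) (h' : π' v < π' u) :
    blockKey a (x.1 v) = blockKey a (x.1 u) ∧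
      π (x.1 v) < π (x.1 u) ∧ π' (x.1 u) < π' (x.1 v) := by
  have l := hd _ _ h (by rw [hπ, hπ, hkey])
  have l' := hd' _ _ h' (by rw [hπ', hπ', hkey])
  rw [letter_conjPerm, letter_conjPerm, Prod.Lex.toLex_lt_toLex] at l l'
  dsimp only at l l'
  obtain ⟨l, l'⟩ : π (x.1 v) < π (x.1 u) ∧ π' (x.1 u) < π' (x.1 v) := by
    rcases l with l | ⟨e, l⟩ <;> rcases l' with l' | ⟨e', l'⟩ <;> omega
  refine ⟨by_contra fun hk => ?_, l, l'⟩
  exact lt_asymm ((lt_iff_lt_of_blockKey_ne a hπ hk).mp l)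
    ((lt_iff_lt_of_blockKey_ne a hπ' (Ne.symm hk)).mp l')

lemma descendsOnBlocks_unique {x : CP n r} (hcyc : ∀ q, 2 * k < #(cycleSet x q))
    {π π' : Perm (Fin n)}
    (hπ : PreservesBlocks a π) (hπ' : PreservesBlocks a π')
    (hd : DescendsOnBlocks a (conjPerm π x)) (hd' : DescendsOnBlocks a (conjPerm π' x)) :
    π = π' := by
  refine Perm.eq_of_forall_lt_imp_lt fun z z' hlt => ?_
  by_cases hkey : blockKey a z = blockKey a z'
  swap
  · exact (lt_iff_lt_of_blockKey_ne a hπ' hkey).mpr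
      ((lt_iff_lt_of_blockKey_ne a hπ hkey).mp hlt)
  by_contra hge
  have hlt' : π' z' < π' z :=
    lt_of_le_of_ne (not_lt.mp hge) fun h => hlt.ne (congrArg π (π'.injective h).symm)
  have hpow : ∀ j u v, blockKey a u = blockKey a v → π u < π v → π' v < π' u →
      blockKey a ((x.1 ^ j) u) = blockKey a ((x.1 ^ j) v) := by
    intro j
    induction j with
    | zero => exact fun u v h _ _ => h
    | succ j ih =>
      intro u v h h₁ h₂
      obtain ⟨hk, h₁', h₂'⟩ := disagreement_step a hπ hπ' hd hd' h h₁ h₂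
      simpa only [pow_succ, Perm.mul_apply] using (ih _ _ hk h₁' h₂').symm
  obtain ⟨j, hj⟩ := exists_blockKey_pow_ne a (hcyc z) (ne_of_apply_ne π hlt.ne)
  exact hj (hpow j z z' hkey hlt hlt')

lemma exists_perm_blockKey_eq_lt_iff {β : Type*} [LinearOrder β] (f : Fin n → β)
    (hf : ∀ q q', blockKey a q = blockKey a q' → f q = f q' → q = q') :
    ∃ π : Perm (Fin n), PreservesBlocks a π ∧
      ∀ q q', blockKey a q = blockKey a q' → (π q < π q' ↔ f q < f q') := by
  set φ : Fin n → ℕ ×ₗ β := fun z => toLex (blockKey a z, f z)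
  have hφ : Function.Injective φ := fun q q' h => by
    obtain ⟨h₁, h₂⟩ := Prod.ext_iff.mp (toLex.injective h)
    exact hf q q' h₁ h₂
  set σ := Tuple.sort φ
  have hσ : StrictMono (φ ∘ σ) :=
    (Tuple.monotone_sort φ).strictMono_of_injective (hφ.comp σ.injective)
  -- `blockKey a` is already sorted, so sorting by it first leaves it in place.
  have hkey : blockKey a ∘ σ = blockKey a ∘ ⇑(1 : Perm (Fin n)) :=
    Tuple.unique_monotone (fun i j hij => Prod.Lex.monotone_fst _ _ (hσ.monotone hij))
      fun _ _ h => blockKey_mono a h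
  refine ⟨σ⁻¹, fun p => ?_, fun q q' hqq' => ?_⟩
  · simpa using (congrFun hkey (σ⁻¹ p)).symm
  · rw [← hσ.lt_iff_lt]
    simp [φ, Prod.Lex.toLex_lt_toLex, hqq']

-- The word `c q, κ (w q), -c (w q), -κ (w² q), c (w² q), …` for `x = (w, c)` and
-- `κ = blockKey a`: the sign flips at each step because, for equal colours, the descent
-- condition compares `w q', w q` in the order opposite to `q, q'`.
def signature (x : CP n r) : ℕ → Fin n → ℤ
  | 0, q => (x.2 q).val
  | 1, q => blockKey a (x.1 q)
  | m + 2, q => -signature x m (x.1 q)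

lemma signature_injective {x : CP n r} (hcyc : ∀ q, 2 * k < #(cycleSet x q)) {q q' : Fin n}
    (hkey : blockKey a q = blockKey a q') (h : (signature a x · q) = (signature a x · q')) :
    q = q' := by
  by_contra hne
  obtain ⟨j, hj⟩ := exists_blockKey_pow_ne a (hcyc q) hne
  suffices ∀ j u v, blockKey a u = blockKey a v →
      (signature a x · u) = (signature a x · v) →
      blockKey a ((x.1 ^ j) u) = blockKey a ((x.1 ^ j) v) from hj (this j q q' hkey h)
  intro j
  induction j with
  | zero => exact fun u v h _ => h
  | succ j ih =>
    intro u v _ h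
    have h₁ : blockKey a (x.1 u) = blockKey a (x.1 v) := by
      have := congrFun h 1
      simp only [signature] at this
      exact_mod_cast this
    have h₂ : (signature a x · (x.1 u)) = (signature a x · (x.1 v)) :=
      funext fun m => neg_injective (congrFun h (m + 2))
    simpa only [pow_succ, Perm.mul_apply] using ih _ _ h₁ h₂

lemma letter_lt_of_signature_lt {x : CP n r} {π : Perm (Fin n)}
    (hπ : PreservesBlocks a π)
    (hsort : ∀ q q', blockKey a q = blockKey a q' →
      (π q < π q' ↔ toLex (signature a x · q') < toLex (signature a x · q)))
    {q q' : Fin n} (h : toLex (signature a x · q') < toLex (signature a x · q)) :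
    letter (conjPerm π x) (π q') < letter (conjPerm π x) (π q) := by
  rw [letter_conjPerm, letter_conjPerm, Prod.Lex.toLex_lt_toLex]
  rw [Pi.toLex_lt_toLex_iff_head, Pi.toLex_lt_toLex_iff_head] at h
  simp only [signature, Nat.cast_lt, Nat.cast_inj] at h
  rcases h with h | ⟨h₀, h | ⟨h₁, h⟩⟩
  · exact Or.inl h
  · exact Or.inr ⟨h₀, (lt_iff_lt_of_blockKey_ne a hπ h.ne).mpr (lt_of_blockKey_lt a h)⟩
  · refine Or.inr ⟨h₀, ?_⟩
    have h : -toLex (signature a x · (x.1 q')) < -toLex (signature a x · (x.1 q)) := h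
    exact (hsort _ _ h₁).mpr (neg_lt_neg_iff.mp h)

lemma exists_descendsOnBlocks {x : CP n r} (hcyc : ∀ q, 2 * k < #(cycleSet x q)) :
    ∃ π : Perm (Fin n), PreservesBlocks a π ∧
      DescendsOnBlocks a (conjPerm π x) := by
  obtain ⟨π, hπ, hsort⟩ := exists_perm_blockKey_eq_lt_iff a
    (fun q => OrderDual.toDual (toLex (signature a x · q)))
    fun q q' hkey h =>
      signature_injective a hcyc hkey (toLex.injective (OrderDual.toDual.injective h))
  refine ⟨π, hπ, fun p p' hlt hkey => ?_⟩
  obtain ⟨q, rfl⟩ := π.surjective p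
  obtain ⟨q', rfl⟩ := π.surjective p'
  rw [hπ, hπ] at hkey
  exact letter_lt_of_signature_lt a hπ
    (fun q q' h => (hsort q q' h).trans OrderDual.toDual_lt_toDual) ((hsort q q' hkey).mp hlt)

end Representative

end ColoredPerm

open ColoredPerm in
theorem orbit_structure_general (n r k : ℕ) [NeZero r] (a : Fin k → Fin n)
    (ha : ∀ i, (a i : ℕ) + 1 < n) (C : Finset (CP n r))
    (hshort : NoShortCycles C (2 * k)) :
    (Finset.univ.filter
        (fun π : Equiv.Perm (Fin n) => ∀ p, SameBlock a p (π p))).card =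
      ∏ b ∈ blocks a, Nat.factorial b.card ∧
    ∀ x ∈ C,
      ((Finset.univ.filter
            (fun π : Equiv.Perm (Fin n) => ∀ p, SameBlock a p (π p))).image
          (fun π => cmul (cmul ((π, fun _ => 0) : CP n r) x) (cinv (π, fun _ => 0)))).card =
        (Finset.univ.filter
          (fun π : Equiv.Perm (Fin n) => ∀ p, SameBlock a p (π p))).card ∧
      ∃! y : CP n r,
        y ∈ ((Finset.univ.filter
              (fun π : Equiv.Perm (Fin n) => ∀ p, SameBlock a p (π p))).image
            (fun π => cmul (cmul ((π, fun _ => 0) : CP n r) x) (cinv (π, fun _ => 0)))) ∧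
          ∀ i, IsDescent y (a i) := by
  refine ⟨card_filter_sameBlock a, fun x hx => ?_⟩
  have hcyc := two_mul_lt_card_cycleSet (hshort x hx)
  simp only [cmul_cmul_cinv]
  refine ⟨card_image_of_injOn fun π hπ π' hπ' h => eq_of_conjPerm_eq a hcyc
    ((mem_filter_sameBlock a).mp hπ) ((mem_filter_sameBlock a).mp hπ') h, ?_⟩
  obtain ⟨π₀, hπ₀, hd₀⟩ := exists_descendsOnBlocks a hcyc
  refine ⟨conjPerm π₀ x, ⟨mem_image_of_mem _ ((mem_filter_sameBlock a).mpr hπ₀),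
    (forall_isDescent_iff a ha _).mpr hd₀⟩, ?_⟩
  rintro _ ⟨hy, hd⟩
  obtain ⟨π, hπ, rfl⟩ := mem_image.mp hy
  rw [descendsOnBlocks_unique a hcyc ((mem_filter_sameBlock a).mp hπ) hπ₀
    ((forall_isDescent_iff a ha _).mp hd) hd₀]

open ColoredPerm in
theorem orbit_structure (n r k : ℕ) [NeZero r] (a : Fin k → Fin n)
    (ha : ∀ i, (a i : ℕ) + 1 < n) (C : Finset (CP n r)) (hC : IsConjClass C)
    (hshort : NoShortCycles C (2 * k)) :
    (Finset.univ.filter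
        (fun π : Equiv.Perm (Fin n) => ∀ p, SameBlock a p (π p))).card =
      ∏ b ∈ blocks a, Nat.factorial b.card ∧
    ∀ x ∈ C,
      ((Finset.univ.filter
            (fun π : Equiv.Perm (Fin n) => ∀ p, SameBlock a p (π p))).image
          (fun π => cmul (cmul ((π, fun _ => 0) : CP n r) x) (cinv (π, fun _ => 0)))).card =
        (Finset.univ.filter
          (fun π : Equiv.Perm (Fin n) => ∀ p, SameBlock a p (π p))).card ∧
      ∃! y : CP n r,
        y ∈ ((Finset.univ.filter
              (fun π : Equiv.Perm (Fin n) => ∀ p, SameBlock a p (π p))).image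
            (fun π => cmul (cmul ((π, fun _ => 0) : CP n r) x) (cinv (π, fun _ => 0)))) ∧
          ∀ i, IsDescent y (a i) :=
  orbit_structure_general n r k a ha C hshort
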